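/- arXiv:1608.03957 — 5 statements merged into one kernel-verified Lean document; each statement's English description precedes it below -/
import Mathlib

section
/- Let f : ℕ → ℂ be completely multiplicative, and suppose f is eventually periodic (there exist N ≥ 0 and T ≥ 1 with f(n + T) = f(n) for all n ≥ N). If there exists an integer n > 1 with f(n) ≠ 0, then f agrees with a Dirichlet character: there exist an integer q ≥ 1 and a Dirichlet character χ mod q such that f(n) = χ(n) for all n ≥ 1. -/
/-!
If `f a ≠ 0`, complete multiplicativity lets us cancel `f a` from `f (a n + a t) = f (a n)`, so a
period of `f` along the multiples of `a` is a period of `f`. Applied with `a` a large power of a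
point where `f` does not vanish, this turns eventual periodicity into periodicity on `n ≥ 1`;
applied with `a = p` prime, it shows that `f p = 0` for every prime `p` dividing the minimal
period `q`. Then `f` vanishes off the residues coprime to `q` and factors through `ZMod q`.
-/

/-- `f : ℕ → ℂ` is completely multiplicative. -/
def CompletelyMultiplicativeFun (f : ℕ → ℂ) : Prop :=
  f 1 = 1 ∧ ∀ m n : ℕ, f (m * n) = f m * f n

def IsPeriodFrom {α : Type*} (f : ℕ → α) (N t : ℕ) : Prop :=
  ∀ n ≥ N, f (n + t) = f n

namespace IsPeriodFrom

variable {α : Type*} {f : ℕ → α} {N t : ℕ}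

theorem mul (h : IsPeriodFrom f N t) (k : ℕ) : IsPeriodFrom f N (k * t) := by
  induction k with
  | zero => simp [IsPeriodFrom]
  | succ k ih =>
    intro n hn
    rw [Nat.succ_mul, ← add_assoc, h _ (by omega), ih n hn]

theorem eq_of_modEq (h : IsPeriodFrom f N t) {m n : ℕ} (hm : N ≤ m) (hn : N ≤ n)
    (hmn : m ≡ n [MOD t]) : f m = f n := by
  wlog hle : m ≤ n generalizing m n
  · exact (this hn hm hmn.symm (by omega)).symm
  obtain ⟨k, hk⟩ := (Nat.modEq_iff_dvd' hle).mp hmn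
  rw [show n = m + k * t by rw [mul_comm]; omega, h.mul k m hm]

end IsPeriodFrom

namespace CompletelyMultiplicativeFun

variable {f : ℕ → ℂ}

theorem map_pow (hf : CompletelyMultiplicativeFun f) (n k : ℕ) : f (n ^ k) = f n ^ k := by
  induction k with
  | zero => simpa using hf.1
  | succ k ih => rw [pow_succ, pow_succ, hf.2, ih]

theorem exists_ge_map_ne_zero (hf : CompletelyMultiplicativeFun f) {n : ℕ} (hn : 1 < n)
    (hfn : f n ≠ 0) (N : ℕ) : ∃ a ≥ N, f a ≠ 0 :=
  ⟨n ^ N, (Nat.lt_pow_self hn).le, by rw [hf.map_pow]; exact pow_ne_zero _ hfn⟩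

theorem isPeriodFrom_one_of_mul (hf : CompletelyMultiplicativeFun f) {a N t : ℕ}
    (ha : f a ≠ 0) (hNa : N ≤ a) (h : IsPeriodFrom f N (a * t)) : IsPeriodFrom f 1 t := by
  intro n hn
  have key : f (a * (n + t)) = f (a * n) := by
    rw [mul_add]
    exact h _ (hNa.trans (Nat.le_mul_of_pos_right a hn))
  rw [hf.2, hf.2] at key
  exact mul_left_cancel₀ ha key

theorem map_prime_eq_zero_of_dvd_minimal_period (hf : CompletelyMultiplicativeFun f) {q : ℕ}
    (hq0 : 0 < q) (hq : IsPeriodFrom f 1 q) (hmin : ∀ t, 0 < t → t < q → ¬IsPeriodFrom f 1 t)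
    {p : ℕ} (hp : p.Prime) (hpq : p ∣ q) : f p = 0 := by
  by_contra hfp
  refine hmin (q / p) (Nat.div_pos (Nat.le_of_dvd hq0 hpq) hp.pos)
    (Nat.div_lt_self hq0 hp.one_lt) (hf.isPeriodFrom_one_of_mul hfp hp.one_lt.le ?_)
  rwa [Nat.mul_div_cancel' hpq]

theorem map_eq_zero_of_not_coprime (hf : CompletelyMultiplicativeFun f) {q : ℕ}
    (hq : ∀ p, p.Prime → p ∣ q → f p = 0) {m : ℕ} (hm : ¬m.Coprime q) : f m = 0 := by
  obtain ⟨p, hp, ⟨k, rfl⟩, hpq⟩ := Nat.Prime.not_coprime_iff_dvd.mp hm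
  rw [hf.2, hq p hp hpq, zero_mul]

theorem exists_dirichletCharacter_eq (hf : CompletelyMultiplicativeFun f) {q : ℕ} [NeZero q]
    (hper : IsPeriodFrom f 1 q) (hq : ∀ p, p.Prime → p ∣ q → f p = 0) :
    ∃ χ : DirichletCharacter ℂ q, ∀ n, 1 ≤ n → f n = χ n := by
  have hq0 : 0 < q := Nat.pos_of_ne_zero (NeZero.ne q)
  have cast_rep (x : ZMod q) : ((x.val + q : ℕ) : ZMod q) = x := by simp
  -- `f` need not follow the period at `x.val = 0`, hence the positive representative `x.val + q`.
  have eq_rep {m : ℕ} (hm : 1 ≤ m) {x : ZMod q} (hx : (m : ZMod q) = x) :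
      f m = f (x.val + q) :=
    hper.eq_of_modEq hm (by omega) ((ZMod.natCast_eq_natCast_iff _ _ _).mp (by rw [hx, cast_rep]))
  refine ⟨{ toFun := fun x => f (x.val + q),
             map_one' := by rw [← eq_rep le_rfl Nat.cast_one, hf.1],
             map_mul' := fun x y => by
               rw [← hf.2, ← eq_rep (m := (x.val + q) * (y.val + q))
                 (Nat.mul_pos (by omega) (by omega)) (by push_cast [cast_rep]; rfl)],
             map_nonunit' := fun x hx => hf.map_eq_zero_of_not_coprime hq
               (by rwa [← ZMod.isUnit_iff_coprime, cast_rep]) }, ?_⟩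
  exact fun n hn => eq_rep hn rfl

end CompletelyMultiplicativeFun

theorem completely_multiplicative_eventually_periodic_is_dirichlet_character
    (f : ℕ → ℂ) (hf : CompletelyMultiplicativeFun f)
    (hper : ∃ N T : ℕ, 1 ≤ T ∧ ∀ n ≥ N, f (n + T) = f n)
    (hnz : ∃ n : ℕ, 1 < n ∧ f n ≠ 0) :
    ∃ (q : ℕ), 1 ≤ q ∧ ∃ χ : DirichletCharacter ℂ q, ∀ n : ℕ, 1 ≤ n → f n = χ (n : ZMod q) := by
  classical
  obtain ⟨N, T, hT, hTper⟩ := hper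
  obtain ⟨n₀, hn₀, hfn₀⟩ := hnz
  obtain ⟨a, haN, hfa⟩ := hf.exists_ge_map_ne_zero hn₀ hfn₀ N
  have hperiod : ∃ t, 0 < t ∧ IsPeriodFrom f 1 t :=
    ⟨T, hT, hf.isPeriodFrom_one_of_mul hfa haN (IsPeriodFrom.mul hTper a)⟩
  obtain ⟨hq0, hq⟩ := Nat.find_spec hperiod
  have hmin : ∀ t, 0 < t → t < Nat.find hperiod → ¬IsPeriodFrom f 1 t :=
    fun t ht hlt hper => Nat.find_min hperiod hlt ⟨ht, hper⟩
  have : NeZero (Nat.find hperiod) := ⟨hq0.ne'⟩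
  exact ⟨_, hq0, hf.exists_dirichletCharacter_eq hq fun p hp hpq =>
    hf.map_prime_eq_zero_of_dvd_minimal_period hq0 hq hmin hp hpq⟩
end

section
/- Let q ≥ 2 be an integer and let f : ℕ → ℂ be completely multiplicative and q-automatic. Then every nonzero value of f is a root of unity: for every n ≥ 1, either f(n) = 0 or there exists an integer k ≥ 1 with f(n)^k = 1. -/
/-- `f : ℕ → ℂ` is `q`-automatic: its `q`-kernel is finite. -/
def IsAutomatic (q : ℕ) (f : ℕ → ℂ) : Prop :=
  Set.Finite {g : ℕ → ℂ | ∃ k s : ℕ, s < q ^ k ∧ g = fun m => f (q ^ k * m + s)}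

/-!
Evaluating the kernel functions `m ↦ f (q ^ k * m + s)` at `m = 0` recovers every value `f s`
(take `k = s`), so a `q`-automatic sequence takes only finitely many values. For a completely
multiplicative `f` the powers `f n ^ j = f (n ^ j)` are among these values, so a nonzero `f n`
has finite order in `ℂˣ`.
-/

open Submonoid

theorem IsAutomatic.finite_range {q : ℕ} {f : ℕ → ℂ} (hq : 1 < q) (haut : IsAutomatic q f) :
    (Set.range f).Finite := by
  refine (haut.image fun g => g 0).subset ?_
  rintro - ⟨n, rfl⟩
  exact ⟨fun m => f (q ^ n * m + n), ⟨n, n, Nat.lt_pow_self hq, rfl⟩, by simp⟩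

theorem CompletelyMultiplicativeFun.map_pow_s2 {f : ℕ → ℂ} (hf : CompletelyMultiplicativeFun f)
    (n j : ℕ) : f (n ^ j) = f n ^ j := by
  induction j with
  | zero => simpa using hf.1
  | succ j ih => rw [pow_succ, hf.2, ih, pow_succ]

theorem CompletelyMultiplicativeFun.powers_subset_range {f : ℕ → ℂ}
    (hf : CompletelyMultiplicativeFun f) (n : ℕ) : (powers (f n) : Set ℂ) ⊆ Set.range f := by
  rintro - ⟨j, rfl⟩
  exact ⟨n ^ j, hf.map_pow_s2 n j⟩

theorem isOfFinOrder_of_finite_powers₀ {G₀ : Type*} [GroupWithZero G₀] {x : G₀} (hx : x ≠ 0)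
    (h : (powers x : Set G₀).Finite) : IsOfFinOrder x := by
  rw [← Units.val_mk0 hx, Units.isOfFinOrder_val, ← finite_powers]
  refine (h.preimage Units.val_injective.injOn).subset ?_
  rintro - ⟨j, rfl⟩
  exact ⟨j, by simp⟩

theorem automatic_completely_multiplicative_values_roots_of_unity
    (q : ℕ) (hq : 2 ≤ q) (f : ℕ → ℂ)
    (hmul : CompletelyMultiplicativeFun f) (haut : IsAutomatic q f) :
    ∀ n : ℕ, 1 ≤ n → f n = 0 ∨ ∃ k : ℕ, 1 ≤ k ∧ f n ^ k = 1 := by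
  intro n _
  refine (eq_or_ne (f n) 0).imp id fun h0 => ?_
  have hfin : (powers (f n) : Set ℂ).Finite :=
    (haut.finite_range hq).subset (hmul.powers_subset_range n)
  exact isOfFinOrder_iff_pow_eq_one.mp (isOfFinOrder_of_finite_powers₀ h0 hfin)
end

section
/- Let a be a nonzero integer with a ≢ 3 (mod 4). Then the Kronecker symbol κ_a : ℕ → ℤ is periodic: there exists an integer T ≥ 1 such that κ_a(n + T) = κ_a(n) for all n ≥ 1. -/
/-!
For even `a` we have `χ₈(a) = 0`, so `κ_a` vanishes on even `n`, while on odd `n` it is the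
Jacobi symbol `J(a | n)`, which depends only on `n` modulo `4|a|`. For `a ≡ 1 (mod 4)`,
quadratic reciprocity together with `χ₈(a) = J(2 | |a|)` turns `κ_a(n)` into `J(n | |a|)` for
`n ≥ 1`, which depends only on `n` modulo `|a|`. In both cases `4|a|` is a period.
-/

/-- The Kronecker symbol `κ_a(n) = (a | n)` for `n : ℕ`. -/
def kron (a : ℤ) (n : ℕ) : ℤ :=
  if n = 0 then 0
  else (ZMod.χ₈ (a : ZMod 8)) ^ (padicValNat 2 n) * jacobiSym a (n / 2 ^ padicValNat 2 n)

open ZMod NumberTheorySymbols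

lemma ZMod.χ₈_neg (x : ZMod 8) : χ₈ (-x) = χ₈ x := by
  revert x; decide

lemma ZMod.χ₈_natAbs (a : ℤ) : χ₈ (a.natAbs : ZMod 8) = χ₈ (a : ZMod 8) := by
  obtain ⟨k, rfl | rfl⟩ := Int.eq_nat_or_neg a
  · rw [Int.natAbs_natCast, Int.cast_natCast]
  · rw [Int.natAbs_neg, Int.natAbs_natCast, Int.cast_neg, Int.cast_natCast, χ₈_neg]

lemma ZMod.χ₈_int_eq_zero_of_even {a : ℤ} (ha : Even a) : χ₈ (a : ZMod 8) = 0 := by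
  rw [χ₈_int_eq_if_mod_eight, if_pos (Int.even_iff.mp ha)]

lemma jacobiSym.quadratic_reciprocity_one_mod_four_int {a : ℤ} (ha : a % 4 = 1) {m : ℕ}
    (hm : Odd m) : J(a | m) = J(m | a.natAbs) := by
  obtain ⟨k, rfl | rfl⟩ := Int.eq_nat_or_neg a
  · exact jacobiSym.quadratic_reciprocity_one_mod_four (by omega) hm
  -- For `a = -k` with `k ≡ 3 (mod 4)`, the factor `J(-1 | m) = χ₄ m` cancels the reciprocity sign.
  · have hk : k % 4 = 3 := by omega
    rw [Int.natAbs_neg, Int.natAbs_natCast, jacobiSym.neg _ hm]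
    rcases Nat.odd_mod_four_iff.mp (Nat.odd_iff.mp hm) with hm4 | hm4
    · rw [χ₄_nat_one_mod_four hm4, one_mul,
        jacobiSym.quadratic_reciprocity_one_mod_four' (Nat.odd_iff.mpr (by omega)) hm4]
    · rw [χ₄_nat_three_mod_four hm4, jacobiSym.quadratic_reciprocity_three_mod_four hk hm4,
        neg_one_mul, neg_neg]

lemma kron_two_pow_mul (a : ℤ) (e : ℕ) {m : ℕ} (hm : Odd m) :
    kron a (2 ^ e * m) = χ₈ a ^ e * J(a | m) := by
  have hm0 : m ≠ 0 := hm.pos.ne'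
  have hval : padicValNat 2 (2 ^ e * m) = e := by
    rw [padicValNat.mul (by positivity) hm0, padicValNat.prime_pow,
      padicValNat.eq_zero_of_not_dvd hm.not_two_dvd_nat, add_zero]
  rw [kron, if_neg (mul_ne_zero (by positivity) hm0), hval, Nat.mul_div_cancel_left _ (by positivity)]

lemma kron_of_odd (a : ℤ) {n : ℕ} (hn : Odd n) : kron a n = J(a | n) := by
  simpa using kron_two_pow_mul a 0 hn

lemma kron_eq_zero_of_even {a : ℤ} (ha : Even a) {n : ℕ} (hn : Even n) : kron a n = 0 := by
  rcases eq_or_ne n 0 with rfl | hn0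
  · simp [kron]
  rw [kron, if_neg hn0, χ₈_int_eq_zero_of_even ha,
    zero_pow (Nat.pos_iff_ne_zero.mp (one_le_padicValNat_of_dvd hn0 hn.two_dvd)), zero_mul]

lemma kron_add_four_mul_natAbs_of_even {a : ℤ} (ha : Even a) (n : ℕ) :
    kron a (n + 4 * a.natAbs) = kron a n := by
  have hT : Even (4 * a.natAbs) := (by decide : Even 4).mul_right _
  rcases Nat.even_or_odd n with hn | hn
  · rw [kron_eq_zero_of_even ha hn, kron_eq_zero_of_even ha (hn.add hT)]
  · rw [kron_of_odd a hn, kron_of_odd a (hn.add_even hT), jacobiSym.mod_right a (hn.add_even hT),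
      Nat.add_mod_right, ← jacobiSym.mod_right a hn]

lemma kron_eq_jacobiSym_natAbs_of_one_mod_four {a : ℤ} (ha : a % 4 = 1) {n : ℕ} (hn : n ≠ 0) :
    kron a n = J(n | a.natAbs) := by
  have hodd : Odd a.natAbs := Nat.odd_iff.mpr (by omega)
  obtain ⟨e, m, hm, rfl⟩ := Nat.exists_eq_two_pow_mul_odd hn
  rw [kron_two_pow_mul a e hm, ← χ₈_natAbs, ← jacobiSym.at_two hodd,
    jacobiSym.quadratic_reciprocity_one_mod_four_int ha hm, ← jacobiSym.pow_left,
    ← jacobiSym.mul_left, Nat.cast_mul, Nat.cast_pow, Nat.cast_two]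

lemma kron_add_mul_natAbs_of_one_mod_four {a : ℤ} (ha : a % 4 = 1) {n : ℕ} (hn : n ≠ 0)
    (k : ℕ) : kron a (n + k * a.natAbs) = kron a n := by
  rw [kron_eq_jacobiSym_natAbs_of_one_mod_four ha (by omega),
    kron_eq_jacobiSym_natAbs_of_one_mod_four ha hn]
  exact jacobiSym.mod_left' (by push_cast; exact Int.add_mul_emod_self_right _ _ _)

theorem kron_periodic_of_not_three_mod_four (a : ℤ) (ha : a ≠ 0)
    (h : ¬ a ≡ 3 [ZMOD 4]) :
    ∃ T : ℕ, 1 ≤ T ∧ ∀ n : ℕ, 1 ≤ n → kron a (n + T) = kron a n := by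
  refine ⟨4 * a.natAbs, by have := Int.natAbs_pos.mpr ha; omega, fun n hn => ?_⟩
  rcases Int.even_or_odd a with ha2 | ⟨k, rfl⟩
  · exact kron_add_four_mul_natAbs_of_even ha2 n
  · have ha4 : (2 * k + 1) % 4 = 1 := by rw [Int.ModEq] at h; omega
    exact kron_add_mul_natAbs_of_one_mod_four ha4 (by omega) 4
end

section
/- Let a be an integer with a ≡ 3 (mod 4). Then no odd positive integer is a period of the sequence n ↦ J(a | 2n + 1): for every odd integer T ≥ 1 there exists n ≥ 0 with J(a | 2(n + T) + 1) ≠ J(a | 2n + 1), where J(· | ·) is the Jacobi symbol. (Since the sequence is periodic with period 2|a|, its least period is even.) -/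
/-!
An odd period `T` would give `J(a | 2|a|T + 1) = J(a | 1) = 1`. For `a ≡ 3 (mod 4)`, quadratic
reciprocity reads `J(a | b) = χ₄(b) J(b | |a|)` whatever the sign of `a`; for `b = 2|a|T + 1` we
have `b ≡ 1 (mod |a|)` and, as `|a|T` is odd, `b ≡ 3 (mod 4)`, so `J(a | b) = -1`.
-/

open ZMod

theorem Int.odd_natAbs_of_modEq_three_mod_four {a : ℤ} (ha : a ≡ 3 [ZMOD 4]) :
    Odd a.natAbs :=
  Int.natAbs_odd.mpr (Int.odd_iff.mpr (by have : a % 4 = 3 := ha; omega))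

theorem jacobiSym_eq_χ₄_mul_of_modEq_three_mod_four {a : ℤ} (ha : a ≡ 3 [ZMOD 4]) {b : ℕ}
    (hb : Odd b) : jacobiSym a b = χ₄ b * jacobiSym b a.natAbs := by
  have ha4 : a % 4 = 3 := ha
  have hodd := Int.odd_natAbs_of_modEq_three_mod_four ha
  rcases Int.natAbs_eq a with hpos | hneg
  · have hn : a.natAbs % 4 = 3 := by omega
    rw [hpos, Int.natAbs_natCast, jacobiSym.quadratic_reciprocity hodd hb, pow_mul,
      neg_one_pow_div_two_of_three_mod_four hn, χ₄_eq_neg_one_pow (Nat.odd_iff.mp hb)]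
  · have hn : a.natAbs % 4 = 1 := by omega
    rw [hneg, Int.natAbs_neg, Int.natAbs_natCast, jacobiSym.neg _ hb,
      jacobiSym.quadratic_reciprocity_one_mod_four hn hb]

theorem jacobiSym_two_mul_add_one_of_modEq_three_mod_four {a : ℤ} (ha : a ≡ 3 [ZMOD 4])
    {k : ℕ} (hk : Odd k) (hak : a.natAbs ∣ k) : jacobiSym a (2 * k + 1) = -1 := by
  have hmod : ((2 * k + 1 : ℕ) : ℤ) ≡ ((0 + 1 : ℕ) : ℤ) [ZMOD a.natAbs] :=
    Int.natCast_modEq_iff.mpr ((Nat.modEq_zero_iff_dvd.mpr (hak.mul_left 2)).add_right 1)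
  have h4 : (2 * k + 1) % 4 = 3 := by obtain ⟨j, rfl⟩ := hk; omega
  rw [jacobiSym_eq_χ₄_mul_of_modEq_three_mod_four ha (by simp [parity_simps]),
    jacobiSym.mod_left' hmod, zero_add, Nat.cast_one, jacobiSym.one_left,
    χ₄_nat_three_mod_four h4, mul_one]

theorem no_odd_period_of_jacobi_three_mod_four (a : ℤ) (h : a ≡ 3 [ZMOD 4]) :
    ∀ T : ℕ, 1 ≤ T → Odd T →
      ∃ n : ℕ, jacobiSym a (2 * (n + T) + 1) ≠ jacobiSym a (2 * n + 1) := by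
  intro T _ hT
  by_contra! hshift
  have hperiodic : Function.Periodic (fun n : ℕ => jacobiSym a (2 * n + 1)) T := hshift
  have hone : jacobiSym a (2 * (a.natAbs * T) + 1) = 1 := by
    simpa using hperiodic.nat_mul_eq a.natAbs
  have hneg_one := jacobiSym_two_mul_add_one_of_modEq_three_mod_four h
    ((Int.odd_natAbs_of_modEq_three_mod_four h).mul hT) (dvd_mul_right _ _)
  rw [hone] at hneg_one
  exact absurd hneg_one (by decide)
end

section
/- Let a be an integer with a ≡ 3 (mod 4), and let χ be a Dirichlet character mod 4|a| satisfying χ(n) = κ_a(n) for all odd n ≥ 1 and χ(n) = 0 for all even n. Then for every complex s with Re(s) > 1, ∑'_{n ≥ 1} κ_a(n) / n^s = (1 − χ₈(a)·2^{−s})^{−1} · ∑'_{n ≥ 1} χ(n) / n^s (both series converging absolutely). -/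
open Complex

lemma two_mul_add_one_injective : Function.Injective fun m : ℕ => 2 * m + 1 :=
  fun m n h => by simpa using h

lemma padicValNat_two_pow_mul_two_mul_add_one (k m : ℕ) :
    padicValNat 2 (2 ^ k * (2 * m + 1)) = k := by
  rw [padicValNat.mul (by positivity) (by omega), padicValNat.prime_pow,
    padicValNat.eq_zero_of_not_dvd (by omega), add_zero]

lemma two_pow_mul_two_mul_add_one_injective :
    Function.Injective fun p : ℕ × ℕ => 2 ^ p.1 * (2 * p.2 + 1) := by
  rintro ⟨k, m⟩ ⟨j, l⟩ h
  obtain rfl : k = j := by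
    simpa only [padicValNat_two_pow_mul_two_mul_add_one] using congrArg (padicValNat 2) h
  have : 2 * m + 1 = 2 * l + 1 := Nat.eq_of_mul_eq_mul_left (by positivity) h
  simp only [Prod.mk.injEq, true_and]
  omega

theorem tsum_eq_tsum_two_mul_add_one {M : Type*} [AddCommMonoid M] [TopologicalSpace M]
    {f : ℕ → M} (hf : ∀ n, Even n → f n = 0) : ∑' n, f n = ∑' m, f (2 * m + 1) := by
  refine (two_mul_add_one_injective.tsum_eq fun n hn => ?_).symm
  obtain ⟨m, rfl⟩ := Nat.not_even_iff_odd.mp (mt (hf n) hn)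
  exact ⟨m, rfl⟩

theorem tsum_eq_inv_one_sub_mul_tsum_two_mul_add_one {𝕜 : Type*} [NormedField 𝕜]
    [CompleteSpace 𝕜] {F : ℕ → 𝕜} {x : 𝕜} (hF : Summable F) (hx : ‖x‖ < 1) (hF0 : F 0 = 0)
    (hF2 : ∀ k m, F (2 ^ k * (2 * m + 1)) = x ^ k * F (2 * m + 1)) :
    ∑' n, F n = (1 - x)⁻¹ * ∑' m, F (2 * m + 1) := by
  have he := two_pow_mul_two_mul_add_one_injective
  have hrange : Function.support F ⊆ Set.range fun p : ℕ × ℕ => 2 ^ p.1 * (2 * p.2 + 1) := by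
    intro n hn
    obtain ⟨k, m, ⟨j, rfl⟩, rfl⟩ := Nat.exists_eq_two_pow_mul_odd fun h : n = 0 => hn (h ▸ hF0)
    exact ⟨(k, j), rfl⟩
  have hpairs : Summable fun p : ℕ × ℕ => F (2 ^ p.1 * (2 * p.2 + 1)) := hF.comp_injective he
  have hodd : Summable fun m => F (2 * m + 1) := hF.comp_injective two_mul_add_one_injective
  calc ∑' n, F n = ∑' p : ℕ × ℕ, F (2 ^ p.1 * (2 * p.2 + 1)) := (he.tsum_eq hrange).symm
    _ = ∑' (k) (m), x ^ k * F (2 * m + 1) := by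
      rw [hpairs.tsum_prod' fun k => ?_]
      · simp only [hF2]
      · simpa only [hF2] using hodd.mul_left (x ^ k)
    _ = (1 - x)⁻¹ * ∑' m, F (2 * m + 1) := by
      simp only [tsum_mul_left, tsum_mul_right, tsum_geometric_of_norm_lt_one hx]

lemma summable_norm_div_natCast_cpow_of_bounded {f : ℕ → ℂ} {C : ℝ} (hf : ∀ n, ‖f n‖ ≤ C)
    {s : ℂ} (hs : 1 < s.re) : Summable fun n : ℕ => ‖f n / (n : ℂ) ^ s‖ := by
  rw [summable_norm_iff, ← funext (LSeries.term_of_ne_zero' (ne_zero_of_one_lt_re hs) f)]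
  exact LSeriesSummable_of_bounded_of_one_lt_re (fun n _ => hf n) hs

lemma natCast_two_pow_mul_cpow (k n : ℕ) (s : ℂ) :
    ((2 ^ k * n : ℕ) : ℂ) ^ s = ((2 : ℂ) ^ s) ^ k * (n : ℂ) ^ s := by
  rw [Nat.cast_mul, natCast_mul_natCast_cpow, Nat.cast_pow, ← natCast_cpow_natCast_mul,
    cpow_nat_mul]
  norm_num

lemma norm_two_cpow_neg_lt_one {s : ℂ} (hs : 0 < s.re) : ‖(2 : ℂ) ^ (-s)‖ < 1 := by
  rw [← ofReal_ofNat, norm_cpow_eq_rpow_re_of_pos two_pos, neg_re]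
  exact Real.rpow_lt_one_of_one_lt_of_neg one_lt_two (neg_neg_of_pos hs)

lemma norm_intCast_le_one {z : ℤ} (hz : |z| ≤ 1) : ‖(z : ℂ)‖ ≤ 1 := by
  rw [norm_intCast, ← Int.cast_abs]
  exact_mod_cast hz

lemma abs_χ₈_le_one (x : ZMod 8) : |ZMod.χ₈ x| ≤ 1 := by
  revert x; decide

lemma abs_kron_le_one (a : ℤ) (n : ℕ) : |kron a n| ≤ 1 := by
  unfold kron
  split_ifs
  · simp
  · rw [abs_mul, abs_pow]
    refine mul_le_one₀ (pow_le_one₀ (abs_nonneg _) (abs_χ₈_le_one _)) (abs_nonneg _) ?_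
    rcases jacobiSym.trichotomy a (n / 2 ^ padicValNat 2 n) with h | h | h <;> simp [h]

lemma kron_two_pow_mul_s16 (a : ℤ) (k m : ℕ) :
    kron a (2 ^ k * (2 * m + 1)) = ZMod.χ₈ (a : ZMod 8) ^ k * kron a (2 * m + 1) := by
  have hodd : padicValNat 2 (2 * m + 1) = 0 := padicValNat.eq_zero_of_not_dvd (by omega)
  simp only [kron, if_neg (by positivity : 2 ^ k * (2 * m + 1) ≠ 0),
    if_neg (by omega : 2 * m + 1 ≠ 0), padicValNat_two_pow_mul_two_mul_add_one, hodd, pow_zero,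
    one_mul, Nat.div_one, Nat.mul_div_cancel_left _ (by positivity : 0 < 2 ^ k)]

lemma kron_div_cpow_two_pow_mul (a : ℤ) (s : ℂ) (k m : ℕ) :
    (kron a (2 ^ k * (2 * m + 1)) : ℂ) / ((2 ^ k * (2 * m + 1) : ℕ) : ℂ) ^ s =
      ((ZMod.χ₈ (a : ZMod 8) : ℂ) * (2 : ℂ) ^ (-s)) ^ k *
        ((kron a (2 * m + 1) : ℂ) / ((2 * m + 1 : ℕ) : ℂ) ^ s) := by
  rw [kron_two_pow_mul_s16, natCast_two_pow_mul_cpow, cpow_neg]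
  push_cast
  ring

theorem kron_dirichlet_series_eq_general (a : ℤ)
    (χ : DirichletCharacter ℂ (4 * a.natAbs))
    (hχodd : ∀ n : ℕ, 1 ≤ n → Odd n → χ (n : ZMod (4 * a.natAbs)) = (kron a n : ℂ))
    (hχeven : ∀ n : ℕ, Even n → χ (n : ZMod (4 * a.natAbs)) = 0)
    (s : ℂ) (hs : 1 < s.re) :
    Summable (fun n : ℕ => ‖(kron a n : ℂ) / (n : ℂ) ^ s‖) ∧
    Summable (fun n : ℕ => ‖χ (n : ZMod (4 * a.natAbs)) / (n : ℂ) ^ s‖) ∧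
    ∑' n : ℕ, (kron a n : ℂ) / (n : ℂ) ^ s =
      (1 - ((ZMod.χ₈ (a : ZMod 8) : ℤ) : ℂ) * (2 : ℂ) ^ (-s))⁻¹ *
        ∑' n : ℕ, χ (n : ZMod (4 * a.natAbs)) / (n : ℂ) ^ s := by
  have hκ := summable_norm_div_natCast_cpow_of_bounded
    (fun n => norm_intCast_le_one (abs_kron_le_one a n)) hs
  have hx : ‖((ZMod.χ₈ (a : ZMod 8) : ℤ) : ℂ) * (2 : ℂ) ^ (-s)‖ < 1 := by
    rw [norm_mul]
    exact mul_lt_one_of_nonneg_of_lt_one_right (norm_intCast_le_one (abs_χ₈_le_one _))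
      (norm_nonneg _) (norm_two_cpow_neg_lt_one (by linarith))
  refine ⟨hκ, summable_norm_div_natCast_cpow_of_bounded (fun n => χ.norm_le_one _) hs, ?_⟩
  rw [tsum_eq_inv_one_sub_mul_tsum_two_mul_add_one hκ.of_norm hx (by simp [kron])
      (kron_div_cpow_two_pow_mul a s),
    tsum_eq_tsum_two_mul_add_one (f := fun n : ℕ => χ (n : ZMod (4 * a.natAbs)) / (n : ℂ) ^ s)
      (fun n hn => by rw [hχeven n hn, zero_div])]
  simp only [hχodd _ (Nat.le_add_left 1 _) (odd_two_mul_add_one _)]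

theorem kron_dirichlet_series_eq (a : ℤ) (h : a ≡ 3 [ZMOD 4])
    (χ : DirichletCharacter ℂ (4 * a.natAbs))
    (hχodd : ∀ n : ℕ, 1 ≤ n → Odd n → χ (n : ZMod (4 * a.natAbs)) = (kron a n : ℂ))
    (hχeven : ∀ n : ℕ, Even n → χ (n : ZMod (4 * a.natAbs)) = 0)
    (s : ℂ) (hs : 1 < s.re) :
    Summable (fun n : ℕ => ‖(kron a n : ℂ) / (n : ℂ) ^ s‖) ∧
    Summable (fun n : ℕ => ‖χ (n : ZMod (4 * a.natAbs)) / (n : ℂ) ^ s‖) ∧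
    ∑' n : ℕ, (kron a n : ℂ) / (n : ℂ) ^ s =
      (1 - ((ZMod.χ₈ (a : ZMod 8) : ℤ) : ℂ) * (2 : ℂ) ^ (-s))⁻¹ *
        ∑' n : ℕ, χ (n : ZMod (4 * a.natAbs)) / (n : ℂ) ^ s :=
  kron_dirichlet_series_eq_general a χ hχodd hχeven s hs
end
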